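/- Second hexagon relation for unlinking (Proposition 3.1, relation (3.1c)): Let (C,x) be a quiver pair with m nodes and let i, j, k be pairwise distinct nodes. Let A be the result of applying to (C,x) the unlinkings U(i,j), then U(m+1,k), then U(j,k) (so A has m+3 nodes, the node created at step t having index m+t), and let B be the result of applying U(j,k), then U(i,m+1), then U(i,j). Let τ be the transposition of {1,…,m+3} exchanging m+1 and m+3. Then A and B coincide after relabeling by τ: A's matrix at (a,b) equals B's matrix at (τ(a),τ(b)) and A's variable at a equals B's variable at τ(a), for all a,b. -/
import Mathlib


namespace QuiverUnlink

/-- Unlinking of the distinct nodes `i` and `j`: the matrix part.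
Nodes are indexed `0, …, m-1`; the newly created node has index `m`. -/
def unlinkC {m : ℕ} (C : Fin m → Fin m → ℤ) (i j : Fin m) :
    Fin (m + 1) → Fin (m + 1) → ℤ := fun a b =>
  if ha : (a : ℕ) < m then
    if hb : (b : ℕ) < m then
      if ((⟨a, ha⟩ : Fin m) = i ∧ (⟨b, hb⟩ : Fin m) = j) ∨
         ((⟨a, ha⟩ : Fin m) = j ∧ (⟨b, hb⟩ : Fin m) = i) then
        C i j - 1
      else C ⟨a, ha⟩ ⟨b, hb⟩
    else
      if (⟨a, ha⟩ : Fin m) = i then C i i + C i j - 1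
      else if (⟨a, ha⟩ : Fin m) = j then C j j + C i j - 1
      else C ⟨a, ha⟩ i + C ⟨a, ha⟩ j
  else
    if hb : (b : ℕ) < m then
      if (⟨b, hb⟩ : Fin m) = i then C i i + C i j - 1
      else if (⟨b, hb⟩ : Fin m) = j then C j j + C i j - 1
      else C ⟨b, hb⟩ i + C ⟨b, hb⟩ j
    else C i i + C j j + 2 * C i j - 1

/-- Unlinking of the distinct nodes `i` and `j`: the generating-parameters part. -/
def unlinkX {G : Type*} [CommGroup G] {m : ℕ} (q : G) (x : Fin m → G) (i j : Fin m) :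
    Fin (m + 1) → G := fun a =>
  if ha : (a : ℕ) < m then x ⟨a, ha⟩ else q⁻¹ * x i * x j

private theorem unlinkC_cc {m : ℕ} (C : Fin m → Fin m → ℤ) (i j a b : Fin m) :
    unlinkC C i j a.castSucc b.castSucc =
      if (a = i ∧ b = j) ∨ (a = j ∧ b = i) then C i j - 1 else C a b := by
  simp only [unlinkC, Fin.coe_castSucc]
  rw [dif_pos a.isLt, dif_pos b.isLt]
  try simp only [Fin.eta]

private theorem unlinkC_cl {m : ℕ} (C : Fin m → Fin m → ℤ) (i j a : Fin m) :
    unlinkC C i j a.castSucc (Fin.last m) =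
      if a = i then C i i + C i j - 1 else if a = j then C j j + C i j - 1
      else C a i + C a j := by
  simp only [unlinkC, Fin.coe_castSucc, Fin.val_last]
  rw [dif_pos a.isLt, dif_neg (lt_irrefl m)]
  try simp only [Fin.eta]

private theorem unlinkC_lc {m : ℕ} (C : Fin m → Fin m → ℤ) (i j b : Fin m) :
    unlinkC C i j (Fin.last m) b.castSucc =
      if b = i then C i i + C i j - 1 else if b = j then C j j + C i j - 1
      else C b i + C b j := by
  simp only [unlinkC, Fin.coe_castSucc, Fin.val_last]
  rw [dif_neg (lt_irrefl m), dif_pos b.isLt]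
  try simp only [Fin.eta]

private theorem unlinkC_ll {m : ℕ} (C : Fin m → Fin m → ℤ) (i j : Fin m) :
    unlinkC C i j (Fin.last m) (Fin.last m) =
      C i i + C j j + 2 * C i j - 1 := by
  simp only [unlinkC, Fin.val_last]
  rw [dif_neg (lt_irrefl m), dif_neg (lt_irrefl m)]

private theorem unlinkX_c {G : Type*} [CommGroup G] {m : ℕ} (q : G) (x : Fin m → G)
    (i j a : Fin m) : unlinkX q x i j a.castSucc = x a := by
  simp only [unlinkX, Fin.coe_castSucc]
  rw [dif_pos a.isLt]
  try simp only [Fin.eta]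

private theorem unlinkX_l {G : Type*} [CommGroup G] {m : ℕ} (q : G) (x : Fin m → G)
    (i j : Fin m) : unlinkX q x i j (Fin.last m) = q⁻¹ * x i * x j := by
  simp only [unlinkX, Fin.val_last]
  rw [dif_neg (lt_irrefl m)]


set_option maxHeartbeats 2000000 in
/-- **Second hexagon relation for unlinking** (Proposition 3.1, relation (3.1c)).
For pairwise distinct nodes `i, j, k`, applying `U(i,j)`, `U(m+1,k)`, `U(j,k)` and applying
`U(j,k)`, `U(i,m+1)`, `U(i,j)` give quiver pairs (with `m+3` nodes; the node created at step `t`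
has index `m+t-1` in `Fin (m+3)`) that coincide after relabeling by the transposition of the
first and third created nodes. -/
theorem hexagon_II_relation {G : Type*} [CommGroup G] (q : G) {m : ℕ}
    (C : Fin m → Fin m → ℤ) (hC : ∀ a b, C a b = C b a) (x : Fin m → G)
    (i j k : Fin m) (hij : i ≠ j) (hjk : j ≠ k) (hik : i ≠ k) :
    let A : Fin (m + 3) → Fin (m + 3) → ℤ :=
      unlinkC (unlinkC (unlinkC C i j) ⟨m, by omega⟩ k.castSucc)
        (j.castSucc.castSucc) (k.castSucc.castSucc)
    let Ax : Fin (m + 3) → G :=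
      unlinkX q (unlinkX q (unlinkX q x i j) ⟨m, by omega⟩ k.castSucc)
        (j.castSucc.castSucc) (k.castSucc.castSucc)
    let B : Fin (m + 3) → Fin (m + 3) → ℤ :=
      unlinkC (unlinkC (unlinkC C j k) i.castSucc ⟨m, by omega⟩)
        (i.castSucc.castSucc) (j.castSucc.castSucc)
    let Bx : Fin (m + 3) → G :=
      unlinkX q (unlinkX q (unlinkX q x j k) i.castSucc ⟨m, by omega⟩)
        (i.castSucc.castSucc) (j.castSucc.castSucc)
    let τ : Equiv.Perm (Fin (m + 3)) :=
      Equiv.swap ⟨m, by omega⟩ ⟨m + 2, by omega⟩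
    (∀ a b, A a b = B (τ a) (τ b)) ∧ (∀ a, Ax a = Bx (τ a)) := by
  intro A Ax B Bx τ
  have hne : ∀ (n : ℕ) (c : Fin n), c.castSucc ≠ Fin.last n := fun n c =>
    Fin.ne_of_val_ne (by rw [Fin.coe_castSucc, Fin.val_last]; exact Nat.ne_of_lt c.isLt)
  have hne' : ∀ (n : ℕ) (c : Fin n), Fin.last n ≠ c.castSucc := fun n c => (hne n c).symm
  have hA : A = unlinkC (unlinkC (unlinkC C i j) (Fin.last m) k.castSucc)
      (j.castSucc.castSucc) (k.castSucc.castSucc) := rfl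
  have hB : B = unlinkC (unlinkC (unlinkC C j k) i.castSucc (Fin.last m))
      (i.castSucc.castSucc) (j.castSucc.castSucc) := rfl
  have hAx : Ax = unlinkX q (unlinkX q (unlinkX q x i j) (Fin.last m) k.castSucc)
      (j.castSucc.castSucc) (k.castSucc.castSucc) := rfl
  have hBx : Bx = unlinkX q (unlinkX q (unlinkX q x j k) i.castSucc (Fin.last m))
      (i.castSucc.castSucc) (j.castSucc.castSucc) := rfl
  have hτ1 : τ ((Fin.last m).castSucc.castSucc) = Fin.last (m + 2) :=
    Equiv.swap_apply_left _ _
  have hτ2 : τ (Fin.last (m + 2)) = (Fin.last m).castSucc.castSucc :=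
    Equiv.swap_apply_right _ _
  have hτ3 : ∀ c : Fin m, τ (c.castSucc.castSucc.castSucc) = c.castSucc.castSucc.castSucc :=
    fun c => Equiv.swap_apply_of_ne_of_ne
      (Fin.ne_of_val_ne (by simpa using c.isLt.ne))
      (Fin.ne_of_val_ne (by simp <;> omega))
  have hτ4 : τ ((Fin.last (m + 1)).castSucc) = (Fin.last (m + 1)).castSucc :=
    Equiv.swap_apply_of_ne_of_ne
      (Fin.ne_of_val_ne (by simp)) (Fin.ne_of_val_ne (by simp <;> omega))
  have hcase : ∀ a : Fin (m + 3), (∃ c : Fin m, a = c.castSucc.castSucc.castSucc) ∨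
      a = (Fin.last m).castSucc.castSucc ∨ a = (Fin.last (m + 1)).castSucc ∨
      a = Fin.last (m + 2) := by
    rintro ⟨v, hv⟩
    rcases Nat.lt_or_ge v m with h | h
    · exact Or.inl ⟨⟨v, h⟩, rfl⟩
    · rcases show v = m ∨ v = m + 1 ∨ v = m + 2 by omega with rfl | rfl | rfl
      · exact Or.inr (Or.inl rfl)
      · exact Or.inr (Or.inr (Or.inl rfl))
      · exact Or.inr (Or.inr (Or.inr rfl))
  have hji : ¬ j = i := fun h => hij h.symm
  have hkj : ¬ k = j := fun h => hjk h.symm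
  have hki : ¬ k = i := fun h => hik h.symm
  have e1 := hC i j
  have e2 := hC i k
  have e3 := hC j k
  constructor
  · intro a b
    rcases hcase a with ⟨c, rfl⟩ | rfl | rfl | rfl <;>
      rcases hcase b with ⟨d, rfl⟩ | rfl | rfl | rfl <;>
      rw [hA, hB] <;>
      simp only [hτ1, hτ2, hτ3, hτ4] <;>
      simp [unlinkC_cc, unlinkC_cl, unlinkC_lc, unlinkC_ll, Fin.castSucc_inj, hne, hne'] <;>
      (try split_ifs) <;>
      (try (casesm* _ ∨ _, _ ∧ _)) <;>
      (try subst_vars) <;>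
      first
        | rfl
        | ring1
        | contradiction
        | exact absurd rfl hij
        | exact absurd rfl hjk
        | exact absurd rfl hik
        | exact absurd rfl hji
        | exact absurd rfl hkj
        | exact absurd rfl hki
        | linarith [e1, e2, e3]
        | simp_all
  · intro a
    rcases hcase a with ⟨c, rfl⟩ | rfl | rfl | rfl <;>
      rw [hAx, hBx] <;>
      simp only [hτ1, hτ2, hτ3, hτ4] <;>
      simp [unlinkX_c, unlinkX_l, Fin.castSucc_inj, hne, hne'] <;>
      (try split_ifs) <;>
      first
        | rfl
        | exact absurd rfl hij
        | exact absurd rfl hjk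
        | exact absurd rfl hik
        | exact absurd rfl hji
        | exact absurd rfl hkj
        | exact absurd rfl hki
        | (simp only [mul_assoc, mul_comm, mul_left_comm])
        | (simp_all [mul_assoc, mul_comm, mul_left_comm])

end QuiverUnlink
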